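/- arXiv:1606.08876 — 3 statements merged into one kernel-verified Lean document; each statement's English description precedes it below -/
import Mathlib

section
/- For every convex body K in R^n (n ≥ 2) and every λ ∈ [0,1], the volume of K - λK satisfies Vol_n(K - λK) ≤ (1+λ)^n · Vol_n(K - K) / 2^n. -/
open MeasureTheory Set Pointwise

open scoped ENNReal NNReal

/-!
Write `A = K - λK`. Convexity gives `K + λK = (1 + λ)K`, hence `A - A = (1 + λ)(K - K)`, and the claim
becomes the difference-body inequality `2ⁿ |A| ≤ |A - A|`. This is the Brunn–Minkowski inequality
`4ⁿ |S| |T| ≤ |S + T|²` for `S = A`, `T = -A`, proved by induction on the dimension: the slice volumes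
of `S`, `T` and `S + T` satisfy the hypothesis of the one-dimensional Prékopa–Leindler inequality.
That inequality follows from the one-dimensional Brunn–Minkowski inequality `|S| + |T| ≤ |S + T|`,
applied to superlevel sets after rescaling the two functions to a common supremum.
-/

theorem ENNReal.four_mul_le_sq_add (a b : ℝ≥0∞) : 4 * (a * b) ≤ (a + b) ^ 2 := by
  rcases eq_or_ne a ∞ with rfl | ha
  · rcases eq_or_ne b 0 with rfl | hb <;> simp [*]
  rcases eq_or_ne b ∞ with rfl | hb
  · rcases eq_or_ne a 0 with rfl | ha' <;> simp [*]
  lift a to ℝ≥0 using ha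
  lift b to ℝ≥0 using hb
  rw [← mul_assoc]
  exact_mod_cast _root_.four_mul_le_sq_add a b

theorem ENNReal.exists_mul_eq_inv_mul {a b : ℝ≥0∞} (ha₀ : a ≠ 0) (ha : a ≠ ∞) (hb₀ : b ≠ 0)
    (hb : b ≠ ∞) : ∃ c : ℝ≥0∞, c ≠ 0 ∧ c ≠ ∞ ∧ c * a = c⁻¹ * b := by
  lift a to ℝ≥0 using ha
  lift b to ℝ≥0 using hb
  have hc : NNReal.sqrt (b / a) ≠ 0 := by simp_all
  refine ⟨NNReal.sqrt (b / a), by simpa using hc, ENNReal.coe_ne_top, ?_⟩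
  rw [← ENNReal.coe_inv hc]
  norm_cast
  rw [eq_inv_mul_iff_mul_eq₀ hc, ← mul_assoc, NNReal.mul_self_sqrt,
    div_mul_cancel₀ _ (by simpa using ha₀)]

namespace Real

theorem volume_add_volume_le_volume_add_of_isCompact {S T : Set ℝ} (hS : IsCompact S)
    (hT : IsCompact T) (hS₀ : S.Nonempty) (hT₀ : T.Nonempty) :
    volume S + volume T ≤ volume (S + T) := by
  have ha : sSup S ∈ S := hS.sSup_mem hS₀
  have hb : sInf T ∈ T := hT.sInf_mem hT₀
  -- both translates lie in `S + T` and they meet only at `sSup S + sInf T`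
  have hdisj : AEDisjoint volume (sInf T +ᵥ S) (sSup S +ᵥ T) := by
    refine measure_mono_null (t := {sSup S + sInf T}) ?_ (measure_singleton _)
    rintro _ ⟨⟨s, hs, rfl⟩, ⟨t, ht, hst⟩⟩
    have hs' : s ≤ sSup S := le_csSup hS.bddAbove hs
    have ht' : sInf T ≤ t := csInf_le hT.bddBelow ht
    simp only [vadd_eq_add, mem_singleton_iff] at hst ⊢
    linarith
  calc volume S + volume T = volume ((sInf T +ᵥ S) ∪ (sSup S +ᵥ T)) := by
        rw [measure_union₀ (hT.vadd _).measurableSet.nullMeasurableSet hdisj, measure_vadd,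
          measure_vadd]
    _ ≤ volume (S + T) := by
        refine measure_mono (union_subset ?_ (vadd_set_subset_add ha))
        rw [add_comm]
        exact vadd_set_subset_add hb

theorem volume_add_volume_le_volume_add {S T : Set ℝ} (hS : MeasurableSet S)
    (hT : MeasurableSet T) (hS₀ : S.Nonempty) (hT₀ : T.Nonempty) :
    volume S + volume T ≤ volume (S + T) := by
  obtain ⟨s, hs⟩ := hS₀
  obtain ⟨t, ht⟩ := hT₀
  have hcompact : ∀ K, K ⊆ S ∧ IsCompact K → ∀ L, L ⊆ T ∧ IsCompact L →
      volume K + volume L ≤ volume (S + T) := by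
    rintro K ⟨hKS, hK⟩ L ⟨hLT, hL⟩
    calc volume K + volume L ≤ volume (insert s K) + volume (insert t L) := by
          gcongr <;> exact subset_insert _ _
      _ ≤ volume (insert s K + insert t L) :=
          volume_add_volume_le_volume_add_of_isCompact (hK.insert s) (hL.insert t)
            (insert_nonempty _ _) (insert_nonempty _ _)
      _ ≤ volume (S + T) :=
          measure_mono (add_subset_add (insert_subset hs hKS) (insert_subset ht hLT))
  rw [hS.measure_eq_iSup_isCompact, hT.measure_eq_iSup_isCompact]
  simp_rw [iSup_and']
  exact ENNReal.biSup_add_biSup_le' ⟨∅, empty_subset _, isCompact_empty⟩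
    ⟨∅, empty_subset _, isCompact_empty⟩ hcompact

end Real

theorem lintegral_eq_lintegral_Ioi_measure_lt {α : Type*} [MeasurableSpace α] (μ : Measure α)
    {φ : α → ℝ≥0∞} (hφ : Measurable φ) (hφ_top : ∀ x, φ x ≠ ∞) :
    ∫⁻ x, φ x ∂μ = ∫⁻ t in Ioi 0, μ {x | ENNReal.ofReal t < φ x} := by
  calc ∫⁻ x, φ x ∂μ = ∫⁻ x, ENNReal.ofReal (φ x).toReal ∂μ :=
        lintegral_congr fun x => (ENNReal.ofReal_toReal (hφ_top x)).symm
    _ = ∫⁻ t in Ioi 0, μ {x | t < (φ x).toReal} :=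
        lintegral_eq_lintegral_meas_lt μ (ae_of_all _ fun _ => ENNReal.toReal_nonneg)
          hφ.ennreal_toReal.aemeasurable
    _ = _ := setLIntegral_congr_fun measurableSet_Ioi fun t ht => by
        simp_rw [ENNReal.ofReal_lt_iff_lt_toReal (le_of_lt ht) (hφ_top _)]

section PrekopaLeindler

variable {f g h : ℝ → ℝ≥0∞}

theorem volume_lt_add_volume_lt_le_of_iSup_eq (hf : Measurable f) (hg : Measurable g)
    (hsup : ⨆ x, f x = ⨆ y, g y) (hfgh : ∀ x y, f x * g y ≤ h (x + y) ^ 2) (s : ℝ≥0∞) :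
    volume {x | s < f x} + volume {y | s < g y} ≤ volume {z | s < h z} := by
  by_cases hs : s < ⨆ x, f x
  · have hf₀ : {x | s < f x}.Nonempty := lt_iSup_iff.1 hs
    have hg₀ : {y | s < g y}.Nonempty := lt_iSup_iff.1 (show s < ⨆ y, g y from hsup ▸ hs)
    refine (Real.volume_add_volume_le_volume_add (hf measurableSet_Ioi) (hg measurableSet_Ioi)
      hf₀ hg₀).trans (measure_mono ?_)
    rintro _ ⟨x, hx, y, hy, rfl⟩
    have hsq : s ^ 2 < h (x + y) ^ 2 := (sq s ▸ ENNReal.mul_lt_mul hx hy).trans_le (hfgh x y)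
    exact (ENNReal.pow_lt_pow_left_iff two_ne_zero).1 hsq
  · have hf_le : ∀ x, f x ≤ s := iSup_le_iff.1 (not_lt.1 hs)
    have hg_le : ∀ y, g y ≤ s := iSup_le_iff.1 (hsup ▸ not_lt.1 hs)
    simp [(hf_le _).not_gt, (hg_le _).not_gt]

theorem lintegral_add_lintegral_le_of_iSup_eq (hf : Measurable f) (hg : Measurable g)
    (hh : Measurable h) (hf_top : ∀ x, f x ≠ ∞) (hg_top : ∀ y, g y ≠ ∞) (hh_top : ∀ z, h z ≠ ∞)
    (hsup : ⨆ x, f x = ⨆ y, g y) (hfgh : ∀ x y, f x * g y ≤ h (x + y) ^ 2) :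
    (∫⁻ x, f x) + ∫⁻ y, g y ≤ ∫⁻ z, h z := by
  have hlevel : Measurable fun t : ℝ => volume {x | ENNReal.ofReal t < f x} :=
    Antitone.measurable fun t t' htt' =>
      measure_mono fun x hx => (ENNReal.ofReal_le_ofReal htt').trans_lt hx
  rw [lintegral_eq_lintegral_Ioi_measure_lt volume hf hf_top,
    lintegral_eq_lintegral_Ioi_measure_lt volume hg hg_top,
    lintegral_eq_lintegral_Ioi_measure_lt volume hh hh_top, ← lintegral_add_left hlevel]
  exact lintegral_mono fun t => volume_lt_add_volume_lt_le_of_iSup_eq hf hg hsup hfgh _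

/-- The one-dimensional Prékopa–Leindler inequality. -/
theorem four_mul_lintegral_mul_lintegral_le_sq (hf : Measurable f) (hg : Measurable g)
    (hh : Measurable h) (hf_sup : ⨆ x, f x ≠ ∞) (hg_sup : ⨆ y, g y ≠ ∞) (hh_top : ∀ z, h z ≠ ∞)
    (hfgh : ∀ x y, f x * g y ≤ h (x + y) ^ 2) :
    4 * ((∫⁻ x, f x) * ∫⁻ y, g y) ≤ (∫⁻ z, h z) ^ 2 := by
  rcases eq_or_ne (⨆ x, f x) 0 with hF | hF
  · simp [ENNReal.iSup_eq_zero.1 hF]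
  rcases eq_or_ne (⨆ y, g y) 0 with hG | hG
  · simp [ENNReal.iSup_eq_zero.1 hG]
  -- rescale `f` and `g` in opposite directions until their suprema agree
  obtain ⟨c, hc₀, hc, hcsup⟩ := ENNReal.exists_mul_eq_inv_mul hF hf_sup hG hg_sup
  have hcc : c * c⁻¹ = 1 := ENNReal.mul_inv_cancel hc₀ hc
  have hsum := lintegral_add_lintegral_le_of_iSup_eq (f := fun x => c * f x)
    (g := fun y => c⁻¹ * g y) (hf.const_mul c) (hg.const_mul _) hh
    (fun x => ENNReal.mul_ne_top hc (ne_top_of_le_ne_top hf_sup (le_iSup f x)))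
    (fun y => ENNReal.mul_ne_top (ENNReal.inv_ne_top.2 hc₀) (ne_top_of_le_ne_top hg_sup (le_iSup g y)))
    hh_top (by simp only [← ENNReal.mul_iSup, hcsup])
    (fun x y => by rw [mul_mul_mul_comm, hcc, one_mul]; exact hfgh x y)
  rw [lintegral_const_mul c hf, lintegral_const_mul _ hg] at hsum
  calc 4 * ((∫⁻ x, f x) * ∫⁻ y, g y) = 4 * ((c * ∫⁻ x, f x) * (c⁻¹ * ∫⁻ y, g y)) := by
        rw [mul_mul_mul_comm c, hcc, one_mul]
    _ ≤ ((c * ∫⁻ x, f x) + c⁻¹ * ∫⁻ y, g y) ^ 2 := ENNReal.four_mul_le_sq_add _ _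
    _ ≤ (∫⁻ z, h z) ^ 2 := by gcongr

end PrekopaLeindler

section Slices

variable {E : Type*}

theorem IsCompact.slice [TopologicalSpace E] [T2Space E] {A : Set (ℝ × E)} (hA : IsCompact A) (x : ℝ) :
    IsCompact (Prod.mk x ⁻¹' A) :=
  (hA.image continuous_snd).of_isClosed_subset (hA.isClosed.preimage (Continuous.prodMk_right x))
    fun y hy => ⟨(x, y), hy, rfl⟩

theorem IsCompact.iSup_volume_slice_ne_top [TopologicalSpace E] [MeasureSpace E]
    [IsFiniteMeasureOnCompacts (volume : Measure E)] {A : Set (ℝ × E)} (hA : IsCompact A) :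
    ⨆ x, volume (Prod.mk x ⁻¹' A) ≠ ∞ :=
  ne_top_of_le_ne_top (hA.image continuous_snd).measure_lt_top.ne
    (iSup_le fun x => measure_mono fun y hy => ⟨(x, y), hy, rfl⟩)

theorem slice_add_slice_subset [Add E] (A B : Set (ℝ × E)) (x y : ℝ) :
    Prod.mk x ⁻¹' A + Prod.mk y ⁻¹' B ⊆ Prod.mk (x + y) ⁻¹' (A + B) := by
  rintro _ ⟨a, ha, b, hb, rfl⟩
  exact ⟨(x, a), ha, (y, b), hb, rfl⟩

theorem four_pow_succ_mul_volume_le_volume_add_sq [TopologicalSpace E] [T2Space E] [Add E]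
    [ContinuousAdd E] [MeasureSpace E] [OpensMeasurableSpace E] [SFinite (volume : Measure E)]
    [IsFiniteMeasureOnCompacts (volume : Measure E)] {n : ℕ}
    (hE : ∀ S T : Set E, IsCompact S → IsCompact T →
      4 ^ n * (volume S * volume T) ≤ volume (S + T) ^ 2)
    {A B : Set (ℝ × E)} (hA : IsCompact A) (hB : IsCompact B) :
    4 ^ (n + 1) * (volume A * volume B) ≤ volume (A + B) ^ 2 := by
  have hAB := hA.add hB
  have hslice {C : Set (ℝ × E)} (hC : IsCompact C) :
      Measurable fun x => volume (Prod.mk x ⁻¹' C) :=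
    measurable_measure_prodMk_left hC.measurableSet
  have hvol {C : Set (ℝ × E)} (hC : IsCompact C) :
      volume C = ∫⁻ x, volume (Prod.mk x ⁻¹' C) := by
    rw [Measure.volume_eq_prod, Measure.prod_apply hC.measurableSet]
  have key := four_mul_lintegral_mul_lintegral_le_sq
    (f := fun x => 4 ^ n * volume (Prod.mk x ⁻¹' A)) ((hslice hA).const_mul _) (hslice hB)
    (hslice hAB)
    (by rw [← ENNReal.mul_iSup]; exact ENNReal.mul_ne_top (by simp) hA.iSup_volume_slice_ne_top)
    hB.iSup_volume_slice_ne_top (fun z => (hAB.slice z).measure_lt_top.ne)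
    (fun x y => by
      rw [mul_assoc]
      exact (hE _ _ (hA.slice x) (hB.slice y)).trans
        (by gcongr; exact slice_add_slice_subset A B x y))
  rw [lintegral_const_mul _ (hslice hA), ← hvol hA, ← hvol hB, ← hvol hAB] at key
  calc 4 ^ (n + 1) * (volume A * volume B) = 4 * (4 ^ n * volume A * volume B) := by ring
    _ ≤ volume (A + B) ^ 2 := key

end Slices

/-- The Brunn–Minkowski inequality, in the multiplicative form
`|S|^{1/2} |T|^{1/2} ≤ |(S + T) / 2|`. -/
theorem four_pow_mul_volume_le_volume_add_sq (n : ℕ) {S T : Set (Fin n → ℝ)} (hS : IsCompact S)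
    (hT : IsCompact T) : 4 ^ n * (volume S * volume T) ≤ volume (S + T) ^ 2 := by
  induction n with
  | zero =>
    rcases S.eq_empty_or_nonempty with rfl | hS₀
    · simp
    rcases T.eq_empty_or_nonempty with rfl | hT₀
    · simp
    rw [(hS₀.add hT₀).eq_univ, hS₀.eq_univ, hT₀.eq_univ]
    simp [volume_pi]
  | succ n ih =>
    let e := MeasurableEquiv.piFinSuccAbove (fun _ : Fin (n + 1) => ℝ) 0
    have he : MeasurePreserving e := volume_preserving_piFinSuccAbove _ 0
    have he_cont : Continuous e :=
      (continuous_apply 0).prodMk (continuous_pi fun j => continuous_apply _)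
    have he_add (X Y : Set (Fin (n + 1) → ℝ)) : e '' (X + Y) = e '' X + e '' Y :=
      Set.image_add (AddHom.mk e fun _ _ => rfl)
    have he_vol (X : Set (Fin (n + 1) → ℝ)) : volume (e '' X) = volume X := by
      rw [e.image_eq_preimage_symm, (he.symm e).measure_preimage_equiv]
    have := four_pow_succ_mul_volume_le_volume_add_sq (fun S T hS hT => ih hS hT)
      (hS.image he_cont) (hT.image he_cont)
    rwa [← he_add, he_vol, he_vol, he_vol] at this

theorem two_pow_mul_volume_le_volume_sub_self {n : ℕ} {A : Set (Fin n → ℝ)} (hA : IsCompact A) :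
    2 ^ n * volume A ≤ volume (A - A) := by
  have h := four_pow_mul_volume_le_volume_add_sq n hA hA.neg
  rw [Measure.measure_neg, ← sub_eq_add_neg] at h
  rw [← ENNReal.pow_le_pow_left_iff two_ne_zero]
  calc (2 ^ n * volume A) ^ 2 = 4 ^ n * (volume A * volume A) := by
        rw [show (4 : ℝ≥0∞) ^ n = 2 ^ n * 2 ^ n by rw [← mul_pow]; norm_num]; ring
    _ ≤ volume (A - A) ^ 2 := h

theorem Convex.sub_smul_sub_sub_smul {E : Type*} [AddCommGroup E] [Module ℝ E] {K : Set E}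
    (hK : Convex ℝ K) {lam : ℝ} (hlam : 0 ≤ lam) :
    K - lam • K - (K - lam • K) = (1 + lam) • (K - K) := by
  have hsum : K + lam • K = (1 + lam) • K := by
    rw [hK.add_smul zero_le_one hlam, one_smul]
  rw [sub_eq_add_neg (K - lam • K), neg_sub', sub_neg_eq_add, neg_add_eq_sub, sub_add_sub_comm,
    hsum, add_comm (lam • K), hsum, sub_eq_add_neg, sub_eq_add_neg, smul_add, smul_set_neg]

theorem stmt0_general (n : ℕ) (K : Set (Fin n → ℝ))
    (hKconv : Convex ℝ K) (hKcomp : IsCompact K)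
    (lam : ℝ) (hlam : lam ∈ Set.Icc (0:ℝ) 1) :
    volume (K - lam • K) ≤ ENNReal.ofReal ((1 + lam) ^ n / 2 ^ n) * volume (K - K) := by
  have hA : IsCompact (K - lam • K) := by
    rw [sub_eq_add_neg]
    exact hKcomp.add (hKcomp.smul lam).neg
  have h := two_pow_mul_volume_le_volume_sub_self hA
  rw [hKconv.sub_smul_sub_sub_smul hlam.1, Measure.addHaar_smul, Module.finrank_fin_fun,
    abs_of_nonneg (pow_nonneg (by linarith [hlam.1]) n)] at h
  rw [ENNReal.ofReal_div_of_pos (by positivity), ENNReal.ofReal_pow zero_le_two,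
    ENNReal.ofReal_ofNat, div_eq_mul_inv, mul_right_comm, ← div_eq_mul_inv,
    ENNReal.le_div_iff_mul_le (by simp) (by simp), mul_comm]
  exact h

theorem stmt0 (n : ℕ) (hn : 2 ≤ n) (K : Set (Fin n → ℝ))
    (hKconv : Convex ℝ K) (hKcomp : IsCompact K) (hKint : (interior K).Nonempty)
    (lam : ℝ) (hlam : lam ∈ Set.Icc (0:ℝ) 1) :
    volume (K - lam • K) ≤ ENNReal.ofReal ((1 + lam) ^ n / 2 ^ n) * volume (K - K) :=
  stmt0_general n K hKconv hKcomp lam hlam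
end

section
/- For every sufficiently large n, every convex body K in R^n with the origin in its interior, and every ε ∈ (0,1], there exists a set N of at most (5/ε)^n points such that K ⊆ ∪_{y∈N}(y + εK). -/
/-!
Rogers' covering argument, with an averaging step in place of the Rogers–Shephard inequality.

Averaging `z ↦ vol (K ∩ (z - K))` over `K + K = 2K` gives a centre `c` for which the symmetric
convex body `S = (c + K) ∩ -(c + K) ⊆ c + K` has `vol K ≤ 2ⁿ vol S`; it then suffices to cover `K`
by translates of `εS`. Put `β = ε / 2n`, so `vol ((ε - β) S) ≥ εⁿ vol S / 2`. First place
translates of `(ε - β) S` greedily: by averaging, one of them always covers at least the fraction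
`vol ((ε - β) S) / vol (K + εS) ≥ (ε/4)ⁿ / 2` of what is still uncovered of `K + βS`, so after
`m ≈ 16 n² (4/ε)ⁿ` steps at most `e^{-8n²} vol (K + βS)` is left. The points of `K` not yet within
`εS` of a centre have their `βS`-neighbourhoods inside that leftover, so a maximal packing of such
neighbourhoods has at most `ε⁻ⁿ` members, and the doubled packing covers them. Altogether
`(16 n² + 2) (4/ε)ⁿ ≤ (5/ε)ⁿ` translates for large `n`.
-/

open MeasureTheory Set Pointwise Module Filter

theorem exists_maximal_finset_of_card_le {α : Type*} [DecidableEq α] {P : Finset α → Prop}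
    {M : ℕ} (h0 : P ∅) (hM : ∀ F, P F → F.card ≤ M) : ∃ F, P F ∧ ∀ x ∉ F, ¬P (insert x F) := by
  by_contra! h
  have hcard : ∀ k, ∃ F, P F ∧ F.card = k := by
    intro k
    induction k with
    | zero => exact ⟨∅, h0, rfl⟩
    | succ k ih =>
      obtain ⟨F, hF, rfl⟩ := ih
      obtain ⟨x, hx, hPx⟩ := h F hF
      exact ⟨_, hPx, Finset.card_insert_of_notMem hx⟩
  obtain ⟨F, hF, hFcard⟩ := hcard (M + 1)
  have := hM F hF
  omega

theorem one_half_le_one_sub_one_div_two_mul_pow (d : ℕ) : 1 / 2 ≤ (1 - 1 / (2 * d : ℝ)) ^ d := by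
  rcases Nat.eq_zero_or_pos d with rfl | hd
  · norm_num
  have hdR : (1 : ℝ) ≤ d := by exact_mod_cast hd
  have hbern := one_add_mul_le_pow (R := ℝ) (a := -(1 / (2 * d))) (by
    have : 1 / (2 * (d : ℝ)) ≤ 1 / 2 := one_div_le_one_div_of_le two_pos (by linarith)
    linarith) d
  rwa [← sub_eq_add_neg, show 1 + d * -(1 / (2 * d : ℝ)) = 1 / 2 by field_simp; ring] at hbern

theorem natCeil_add_pow_mul_exp_neg_le {d : ℕ} (hd : 0 < d) {ε : ℝ} (hε0 : 0 < ε) (hε1 : ε ≤ 1) :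
    (⌈16 * d ^ 2 * (4 / ε) ^ d⌉₊ : ℝ) + (8 * d / ε) ^ d *
      Real.exp (-((ε / 4) ^ d / 2 * ⌈16 * d ^ 2 * (4 / ε) ^ d⌉₊)) ≤
      (16 * d ^ 2 + 2) * (4 / ε) ^ d := by
  set x : ℝ := (4 / ε) ^ d
  set m := ⌈16 * d ^ 2 * x⌉₊
  have hdR : (1 : ℝ) ≤ d := by exact_mod_cast hd
  have hx : 1 ≤ x := one_le_pow₀ (by rw [le_div_iff₀ hε0]; linarith)
  have hm : 16 * d ^ 2 * x ≤ m := Nat.le_ceil _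
  have hm' : (m : ℝ) < 16 * d ^ 2 * x + 1 := Nat.ceil_lt_add_one (by positivity)
  have hqm : 8 * d * d ≤ (ε / 4) ^ d / 2 * m := calc
    8 * d * d = (ε / 4) ^ d / 2 * (16 * d ^ 2 * x) := by
      simp only [x]; rw [div_pow, div_pow]; field_simp; ring
    _ ≤ (ε / 4) ^ d / 2 * m := by gcongr
  have hexp : Real.exp (-((ε / 4) ^ d / 2 * m)) ≤ (1 / (8 * d)) ^ d := calc
    Real.exp (-((ε / 4) ^ d / 2 * m)) ≤ Real.exp (-(8 * d * d)) :=
      Real.exp_le_exp.2 (neg_le_neg hqm)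
    _ = (Real.exp (8 * d))⁻¹ ^ d := by rw [← Real.exp_neg, ← Real.exp_nat_mul]; ring_nf
    _ ≤ (1 / (8 * d)) ^ d := by
      rw [one_div]
      gcongr
      linarith [Real.add_one_le_exp (8 * d)]
  have hεx : (1 / ε) ^ d ≤ x := by simp only [x]; gcongr; norm_num
  calc (m : ℝ) + (8 * d / ε) ^ d * Real.exp (-((ε / 4) ^ d / 2 * m))
      ≤ (m : ℝ) + (8 * d / ε) ^ d * (1 / (8 * d)) ^ d := by gcongr
    _ = (m : ℝ) + (1 / ε) ^ d := by rw [← mul_pow]; field_simp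
    _ ≤ (16 * d ^ 2 + 2) * x := by nlinarith

section AddCommGroup

variable {G : Type*} [AddCommGroup G]

theorem mem_vadd_set_iff_sub_mem {x z : G} {B : Set G} : x ∈ z +ᵥ B ↔ x - z ∈ B := by
  rw [mem_vadd_set_iff_neg_vadd_mem, vadd_eq_add, neg_add_eq_sub]

variable [MeasurableSpace G] [MeasurableAdd₂ G] {μ : Measure G} [μ.IsAddLeftInvariant]

theorem exists_finset_card_mul_le_subset_iUnion_vadd_sub {U W A : Set G} (hA : MeasurableSet A)
    (hA0 : μ A ≠ 0) (hAfin : μ A ≠ ⊤) (hWfin : μ W ≠ ⊤) (hUAW : ∀ u ∈ U, u +ᵥ A ⊆ W) :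
    ∃ F : Finset G, (F.card : ℝ) * μ.real A ≤ μ.real W ∧ U ⊆ ⋃ y ∈ F, y +ᵥ (A - A) := by
  classical
  set P : Finset G → Prop := fun F => ↑F ⊆ U ∧ (F : Set G).PairwiseDisjoint (· +ᵥ A)
  have hvol : ∀ F, P F → (F.card : ℝ) * μ.real A ≤ μ.real W := by
    rintro F ⟨hFU, hFdisj⟩
    calc (F.card : ℝ) * μ.real A = μ.real (⋃ y ∈ F, y +ᵥ A) := by
          rw [measureReal_biUnion_finset hFdisj (fun y _ => hA.const_vadd y)
            (fun y _ => by rwa [measure_vadd])]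
          simp [Measure.real, measure_vadd]
      _ ≤ μ.real W := measureReal_mono (iUnion₂_subset fun y hy => hUAW y (hFU hy)) hWfin
  have hApos : 0 < μ.real A := ENNReal.toReal_pos hA0 hAfin
  obtain ⟨F, ⟨hFU, hFdisj⟩, hmax⟩ := exists_maximal_finset_of_card_le (P := P)
    (M := ⌊μ.real W / μ.real A⌋₊) ⟨by simp, by simp⟩
    (fun F hF => Nat.le_floor ((le_div_iff₀ hApos).2 (hvol F hF)))
  refine ⟨F, hvol F ⟨hFU, hFdisj⟩, fun u hu => ?_⟩
  by_contra hcov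
  simp only [mem_iUnion, not_exists] at hcov
  obtain ⟨a, ha⟩ := nonempty_of_measure_ne_zero hA0
  have huF : u ∉ F := fun huF =>
    hcov u huF (mem_vadd_set_iff_sub_mem.2 (by simpa using sub_mem_sub ha ha))
  refine hmax u huF ⟨by simpa using insert_subset hu hFU, ?_⟩
  rw [Finset.coe_insert]
  refine hFdisj.insert fun y hy _ => disjoint_left.2 fun x hxu hxy => hcov y hy ?_
  rw [mem_vadd_set_iff_sub_mem] at hxu hxy ⊢
  simpa using sub_mem_sub hxy hxu

variable [MeasurableNeg G] [SFinite μ] [μ.IsNegInvariant]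

theorem lintegral_measure_inter_vadd {W B : Set G} (hW : MeasurableSet W) (hB : MeasurableSet B) :
    ∫⁻ z, μ (W ∩ (z +ᵥ B)) ∂μ = μ W * μ B := by
  set T : Set (G × G) := {p | p.2 ∈ W ∧ p.2 - p.1 ∈ B}
  have hT : MeasurableSet T := (measurable_snd hW).inter ((measurable_snd.sub measurable_fst) hB)
  calc ∫⁻ z, μ (W ∩ (z +ᵥ B)) ∂μ = μ.prod μ T := by
        rw [Measure.prod_apply hT]
        congr! with z
        ext y
        simp [T, mem_vadd_set_iff_sub_mem]
    _ = ∫⁻ y, W.indicator (fun _ => μ B) y ∂μ := by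
        rw [Measure.prod_apply_symm hT]
        congr! with y
        by_cases hy : y ∈ W
        · rw [indicator_of_mem hy, ← (μ.measurePreserving_sub_left y).measure_preimage
            hB.nullMeasurableSet]
          congr 1
          ext z
          simp [T, hy]
        · simp [T, hy]
    _ = μ W * μ B := by rw [lintegral_indicator_const hW, mul_comm]

theorem exists_measureReal_mul_le_measureReal_inter_vadd {W B D : Set G} (hW : MeasurableSet W)
    (hB : MeasurableSet B) (hD : MeasurableSet D) (hWBD : W - B ⊆ D) (hWfin : μ W ≠ ⊤)
    (hBfin : μ B ≠ ⊤) (hD0 : μ D ≠ 0) (hDfin : μ D ≠ ⊤) :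
    ∃ z : G, μ.real W * μ.real B ≤ μ.real D * μ.real (W ∩ (z +ᵥ B)) := by
  set f : G → ENNReal := fun z => μ (W ∩ (z +ᵥ B))
  have hsupp : f.support ⊆ D := by
    intro z hz
    obtain ⟨y, hyW, hyB⟩ := nonempty_of_measure_ne_zero hz
    exact hWBD (by simpa using sub_mem_sub hyW (mem_vadd_set_iff_sub_mem.1 hyB))
  have hint : ∫⁻ z in D, f z ∂μ = μ W * μ B := by
    rw [setLIntegral_eq_of_support_subset hsupp, lintegral_measure_inter_vadd hW hB]
  obtain ⟨z, -, hz⟩ := exists_setLAverage_le hD0 hD.nullMeasurableSet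
    (hint ▸ ENNReal.mul_ne_top hWfin hBfin)
  refine ⟨z, ?_⟩
  rw [setLAverage_eq, hint, ENNReal.div_le_iff hD0 hDfin] at hz
  have := ENNReal.toReal_mono
    (ENNReal.mul_ne_top (measure_ne_top_of_subset inter_subset_left hWfin) hDfin) hz
  simpa [Measure.real, ENNReal.toReal_mul, mul_comm] using this

theorem exists_finset_measureReal_diff_iUnion_vadd_le {W B D : Set G} (hW : MeasurableSet W)
    (hB : MeasurableSet B) (hD : MeasurableSet D) (hWBD : W - B ⊆ D) (hWfin : μ W ≠ ⊤)
    (hBfin : μ B ≠ ⊤) (hD0 : μ D ≠ 0) (hDfin : μ D ≠ ⊤) (m : ℕ) :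
    ∃ F : Finset G, F.card ≤ m ∧
      μ.real (W \ ⋃ y ∈ F, y +ᵥ B) ≤ μ.real W * Real.exp (-(μ.real B / μ.real D * m)) := by
  classical
  set q := μ.real B / μ.real D
  have hDpos : 0 < μ.real D := ENNReal.toReal_pos hD0 hDfin
  induction m with
  | zero => exact ⟨∅, by simp⟩
  | succ m ih =>
    obtain ⟨F, hFm, hF⟩ := ih
    set W' := W \ ⋃ y ∈ F, y +ᵥ B
    have hW' : MeasurableSet W' :=
      hW.diff (F.measurableSet_biUnion fun y _ => hB.const_vadd y)
    have hW'fin : μ W' ≠ ⊤ := measure_ne_top_of_subset sdiff_subset hWfin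
    obtain ⟨z, hz⟩ := exists_measureReal_mul_le_measureReal_inter_vadd hW' hB hD
      ((sub_subset_sub_right sdiff_subset).trans hWBD) hW'fin hBfin hD0 hDfin
    refine ⟨insert z F, (F.card_insert_le z).trans (by omega), ?_⟩
    have hhit : μ.real W' * q ≤ μ.real (W' ∩ (z +ᵥ B)) := by
      rw [← mul_div_assoc, div_le_iff₀ hDpos, mul_comm _ (μ.real D)]
      exact hz
    rw [Finset.set_biUnion_insert, union_comm, ← Set.sdiff_sdiff, ← sdiff_self_inter,
      measureReal_sdiff inter_subset_left (hW'.inter (hB.const_vadd z)) hW'fin]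
    calc μ.real W' - μ.real (W' ∩ (z +ᵥ B)) ≤ μ.real W' * (1 - q) := by linarith
      _ ≤ μ.real W' * Real.exp (-q) := by
        gcongr
        linarith [Real.add_one_le_exp (-q)]
      _ ≤ μ.real W * Real.exp (-(q * m)) * Real.exp (-q) := by gcongr
      _ = μ.real W * Real.exp (-(q * ↑(m + 1))) := by
        rw [mul_assoc, ← Real.exp_add]
        push_cast
        ring_nf

end AddCommGroup

section NormedSpace

variable {E : Type*} [NormedAddCommGroup E] [NormedSpace ℝ E]

theorem smul_vadd_set_distrib (t : ℝ) (c : E) (K : Set E) : t • (c +ᵥ K) = t • c +ᵥ t • K := by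
  simp only [← image_smul, ← image_vadd, image_image, vadd_eq_add, smul_add]

theorem Convex.smul_sub_smul_of_balanced {S : Set E} (hSc : Convex ℝ S) (hSb : Balanced ℝ S)
    {a b : ℝ} (ha : 0 ≤ a) (hb : 0 ≤ b) : a • S - b • S = (a + b) • S := by
  rw [sub_eq_add_neg, ← smul_set_neg, hSb.neg_eq, hSc.add_smul ha hb]

variable [MeasurableSpace E] [BorelSpace E] [FiniteDimensional ℝ E] {μ : Measure E}
  [μ.IsAddHaarMeasure]

theorem measureReal_smul_of_nonneg {t : ℝ} (ht : 0 ≤ t) (S : Set E) :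
    μ.real (t • S) = t ^ finrank ℝ E * μ.real S := by
  simp [Measure.real, Measure.addHaar_smul_of_nonneg μ ht, ENNReal.toReal_mul, ht]

theorem measureReal_add_smul_le {K S : Set E} {c : E} (hKc : Convex ℝ K) (hK : IsCompact K)
    (hSK : S ⊆ c +ᵥ K) {t : ℝ} (ht : 0 ≤ t) :
    μ.real (K + t • S) ≤ (1 + t) ^ finrank ℝ E * μ.real K := by
  have hsub : K + t • S ⊆ t • c +ᵥ (1 + t) • K := by
    rw [hKc.add_smul zero_le_one ht, one_smul, ← add_vadd_comm, ← smul_vadd_set_distrib]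
    exact add_subset_add_left (smul_set_mono hSK)
  calc μ.real (K + t • S) ≤ μ.real (t • c +ᵥ (1 + t) • K) :=
        measureReal_mono hsub (((hK.smul (1 + t)).vadd _).measure_lt_top.ne)
    _ = (1 + t) ^ finrank ℝ E * μ.real K := by
        rw [← measureReal_smul_of_nonneg (by linarith)]
        simp [Measure.real, measure_vadd]

theorem exists_finset_subset_iUnion_vadd_card_le {K A B C : Set E} (hK : IsCompact K)
    (hA : IsCompact A) (hB : IsCompact B) (hA0 : μ A ≠ 0) (hD0 : μ (K + A - B) ≠ 0)
    (hBA : B - A ⊆ C) (hAA : A - A ⊆ C) (m : ℕ) :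
    ∃ N : Finset E, K ⊆ ⋃ y ∈ N, y +ᵥ C ∧
      (N.card : ℝ) ≤ m + μ.real (K + A) * Real.exp (-(μ.real B / μ.real (K + A - B) * m)) /
        μ.real A := by
  classical
  have hKA : IsCompact (K + A) := hK.add hA
  have hD : IsCompact (K + A - B) := sub_eq_add_neg (K + A) B ▸ hKA.add hB.neg
  obtain ⟨F₁, hF₁m, hF₁⟩ := exists_finset_measureReal_diff_iUnion_vadd_le hKA.measurableSet
    hB.measurableSet hD.measurableSet subset_rfl hKA.measure_lt_top.ne hB.measure_lt_top.ne hD0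
    hD.measure_lt_top.ne m
  have hUA : ∀ u ∈ K \ ⋃ y ∈ F₁, y +ᵥ C, u +ᵥ A ⊆ (K + A) \ ⋃ y ∈ F₁, y +ᵥ B := by
    rintro u ⟨huK, huC⟩ _ ⟨a, ha, rfl⟩
    refine ⟨add_mem_add huK ha, fun hmem => huC ?_⟩
    simp only [mem_iUnion] at hmem ⊢
    obtain ⟨y, hy, hyB⟩ := hmem
    refine ⟨y, hy, mem_vadd_set_iff_sub_mem.2 (hBA ?_)⟩
    convert sub_mem_sub (mem_vadd_set_iff_sub_mem.1 hyB) ha using 1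
    rw [vadd_eq_add]
    abel
  obtain ⟨F₂, hF₂card, hF₂⟩ := exists_finset_card_mul_le_subset_iUnion_vadd_sub hA.measurableSet
    hA0 hA.measure_lt_top.ne (measure_ne_top_of_subset sdiff_subset hKA.measure_lt_top.ne) hUA
  refine ⟨F₁ ∪ F₂, fun x hx => ?_, ?_⟩
  · rw [Finset.set_biUnion_union]
    by_cases hxC : x ∈ ⋃ y ∈ F₁, y +ᵥ C
    · exact Or.inl hxC
    · refine Or.inr ?_
      have := hF₂ ⟨hx, hxC⟩
      simp only [mem_iUnion] at this ⊢
      obtain ⟨y, hy, hxy⟩ := this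
      exact ⟨y, hy, vadd_set_mono hAA hxy⟩
  · have hApos : 0 < μ.real A := ENNReal.toReal_pos hA0 hA.measure_lt_top.ne
    have hF₂le : (F₂.card : ℝ) ≤ μ.real (K + A) *
        Real.exp (-(μ.real B / μ.real (K + A - B) * m)) / μ.real A :=
      (le_div_iff₀ hApos).2 (hF₂card.trans hF₁)
    calc ((F₁ ∪ F₂).card : ℝ) ≤ F₁.card + F₂.card := by exact_mod_cast Finset.card_union_le _ _
      _ ≤ _ := add_le_add (by exact_mod_cast hF₁m) hF₂le

theorem exists_measureReal_le_two_pow_mul_measureReal_inter_neg {K : Set E} (hKc : Convex ℝ K)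
    (hK : IsCompact K) : ∃ c : E, μ.real K ≤ 2 ^ finrank ℝ E * μ.real ((c +ᵥ K) ∩ -(c +ᵥ K)) := by
  rcases eq_or_ne (μ K) 0 with hK0 | hK0
  · exact ⟨0, by simp only [Measure.real, hK0, ENNReal.toReal_zero]; positivity⟩
  have hKK : K - -K = (2 : ℝ) • K := by
    rw [sub_neg_eq_add, ← one_add_one_eq_two, hKc.add_smul zero_le_one zero_le_one, one_smul]
  have h2K : IsCompact ((2 : ℝ) • K) := hK.smul 2
  obtain ⟨x, hx⟩ := exists_measureReal_mul_le_measureReal_inter_vadd (μ := μ) hK.measurableSet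
    hK.neg.measurableSet (hKK ▸ h2K.measurableSet) subset_rfl hK.measure_lt_top.ne
    hK.neg.measure_lt_top.ne
    (by rw [hKK, Measure.addHaar_smul_of_nonneg μ zero_le_two]; simp [hK0])
    (hKK ▸ h2K.measure_lt_top.ne)
  rw [hKK, measureReal_smul_of_nonneg zero_le_two] at hx
  set c : E := -((2 : ℝ)⁻¹ • x)
  have hset : (c +ᵥ K) ∩ -(c +ᵥ K) = c +ᵥ (K ∩ (x +ᵥ -K)) := by
    have hc : -c = c + x := by simp only [c, neg_neg]; module
    rw [vadd_set_inter, vadd_vadd, ← hc]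
    simp only [← image_neg_eq_neg, ← image_vadd, image_image, vadd_eq_add, neg_add]
  refine ⟨c, ?_⟩
  have hKpos : 0 < μ.real K := ENNReal.toReal_pos hK0 hK.measure_lt_top.ne
  rw [hset, show μ.real (c +ᵥ (K ∩ (x +ᵥ -K))) = μ.real (K ∩ (x +ᵥ -K)) by
    simp [Measure.real, measure_vadd]]
  rw [show μ.real (-K) = μ.real K by simp [Measure.real, Measure.measure_neg]] at hx
  exact le_of_mul_le_mul_left (by linarith) hKpos

theorem exists_finset_subset_iUnion_vadd_add_smul_card_le {K S : Set E} (hK : IsCompact K)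
    (hKne : K.Nonempty) (hSc : Convex ℝ S) (hSb : Balanced ℝ S) (hS : IsCompact S)
    (hS0 : μ S ≠ 0) {β γ : ℝ} (hβ : 0 < β) (hβγ : β ≤ γ) (m : ℕ) :
    ∃ N : Finset E, K ⊆ ⋃ y ∈ N, y +ᵥ (β + γ) • S ∧ (N.card : ℝ) ≤ m + μ.real (K + β • S) *
      Real.exp (-(μ.real (γ • S) / μ.real (K + (β + γ) • S) * m)) / μ.real (β • S) := by
  have hγ : 0 < γ := hβ.trans_le hβγ
  have hsmul0 : ∀ t : ℝ, 0 < t → μ (t • S) ≠ 0 := fun t ht => by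
    simp [Measure.addHaar_smul_of_nonneg μ ht.le, hS0, ht]
  have hBA : γ • S - β • S = (β + γ) • S := by
    rw [hSc.smul_sub_smul_of_balanced hSb hγ.le hβ.le, add_comm]
  have hAA : β • S - β • S ⊆ (β + γ) • S := by
    rw [hSc.smul_sub_smul_of_balanced hSb hβ.le hβ.le]
    exact hSb.smul_mono <| by
      rw [Real.norm_of_nonneg (by positivity), Real.norm_of_nonneg (by positivity)]
      linarith
  have hD : K + β • S - γ • S = K + (β + γ) • S := by
    rw [add_sub_assoc, hSc.smul_sub_smul_of_balanced hSb hβ.le hγ.le]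
  have hD0 : μ (K + β • S - γ • S) ≠ 0 := by
    obtain ⟨k, hk⟩ := hKne
    rw [hD]
    exact fun h => hsmul0 _ (add_pos hβ hγ) <| by
      simpa [measure_vadd] using measure_mono_null (vadd_set_subset_add hk) h
  simpa only [hD] using
    exists_finset_subset_iUnion_vadd_card_le hK (hS.smul β) (hS.smul γ) (hsmul0 β hβ) hD0 hBA.le
      hAA m

section Symmetrized

variable {K S : Set E} {c : E} (hKc : Convex ℝ K) (hK : IsCompact K) (hSK : S ⊆ c +ᵥ K)
  (hKS : μ.real K ≤ 2 ^ finrank ℝ E * μ.real S)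
include hKc hK hSK hKS

theorem measureReal_add_smul_le_four_pow_mul {t : ℝ} (ht0 : 0 ≤ t) (ht1 : t ≤ 1) :
    μ.real (K + t • S) ≤ 4 ^ finrank ℝ E * μ.real S := calc
  μ.real (K + t • S) ≤ (1 + t) ^ finrank ℝ E * μ.real K := measureReal_add_smul_le hKc hK hSK ht0
  _ ≤ 2 ^ finrank ℝ E * (2 ^ finrank ℝ E * μ.real S) := by gcongr; linarith
  _ = 4 ^ finrank ℝ E * μ.real S := by rw [← mul_assoc, ← mul_pow]; norm_num

theorem div_four_pow_le_measureReal_smul_div (hS : IsCompact S) (hS0 : μ S ≠ 0) {γ ε : ℝ}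
    (hγ : 0 ≤ γ) (hε0 : 0 < ε) (hε1 : ε ≤ 1) :
    (γ / 4) ^ finrank ℝ E ≤ μ.real (γ • S) / μ.real (K + ε • S) := by
  obtain ⟨s, hs⟩ := nonempty_of_measure_ne_zero hS0
  obtain ⟨k, hk, -⟩ := hSK hs
  have hDpos : 0 < μ.real (K + ε • S) := calc
    0 < μ.real (ε • S) := by
      rw [measureReal_smul_of_nonneg hε0.le]
      exact mul_pos (by positivity) (ENNReal.toReal_pos hS0 hS.measure_lt_top.ne)
    _ = μ.real (k +ᵥ ε • S) := by simp [Measure.real, measure_vadd]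
    _ ≤ μ.real (K + ε • S) :=
      measureReal_mono (vadd_set_subset_add hk) (hK.add (hS.smul ε)).measure_lt_top.ne
  rw [le_div_iff₀ hDpos, measureReal_smul_of_nonneg hγ]
  calc (γ / 4) ^ finrank ℝ E * μ.real (K + ε • S)
      ≤ (γ / 4) ^ finrank ℝ E * (4 ^ finrank ℝ E * μ.real S) := by
        gcongr; exact measureReal_add_smul_le_four_pow_mul hKc hK hSK hKS hε0.le hε1
    _ = γ ^ finrank ℝ E * μ.real S := by rw [div_pow]; field_simp

theorem exists_finset_subset_iUnion_vadd_smul_card_le (hSc : Convex ℝ S) (hSb : Balanced ℝ S)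
    (hS : IsCompact S) (hS0 : μ S ≠ 0) (hd : 0 < finrank ℝ E) {ε : ℝ} (hε0 : 0 < ε)
    (hε1 : ε ≤ 1) (m : ℕ) :
    ∃ N : Finset E, K ⊆ ⋃ y ∈ N, y +ᵥ ε • S ∧ (N.card : ℝ) ≤
      m + (8 * finrank ℝ E / ε) ^ finrank ℝ E * Real.exp (-((ε / 4) ^ finrank ℝ E / 2 * m)) := by
  set d := finrank ℝ E
  have hdR : (1 : ℝ) ≤ d := by exact_mod_cast hd
  have hv : 0 < μ.real S := ENNReal.toReal_pos hS0 hS.measure_lt_top.ne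
  have hKne : K.Nonempty := by
    obtain ⟨k, hk, -⟩ := hSK (nonempty_of_measure_ne_zero hS0).some_mem
    exact ⟨k, hk⟩
  set β := ε / (2 * d)
  have hβ : 0 < β := by positivity
  have hβγ : β ≤ ε - β := by
    rw [le_sub_iff_add_le, ← two_mul, show 2 * β = ε / d by simp only [β]; field_simp]
    exact div_le_self hε0.le hdR
  obtain ⟨N, hcov, hcard⟩ :=
    exists_finset_subset_iUnion_vadd_add_smul_card_le hK hKne hSc hSb hS hS0 hβ hβγ m
  rw [add_sub_cancel] at hcov hcard
  refine ⟨N, hcov, hcard.trans ?_⟩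
  have hq : (ε / 4) ^ d / 2 ≤ μ.real ((ε - β) • S) / μ.real (K + ε • S) := calc
    (ε / 4) ^ d / 2 = (ε / 4) ^ d * (1 / 2) := by ring
    _ ≤ (ε / 4) ^ d * (1 - 1 / (2 * d)) ^ d := by
      gcongr; exact one_half_le_one_sub_one_div_two_mul_pow d
    _ = ((ε - β) / 4) ^ d := by rw [← mul_pow]; simp only [β]; ring
    _ ≤ _ := div_four_pow_le_measureReal_smul_div hKc hK hSK hKS hS hS0 (by linarith) hε0 hε1
  rw [measureReal_smul_of_nonneg hβ.le]
  gcongr (m : ℝ) + ?_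
  calc μ.real (K + β • S) * Real.exp (-(μ.real ((ε - β) • S) / μ.real (K + ε • S) * m)) /
        (β ^ d * μ.real S)
      ≤ 4 ^ d * μ.real S * Real.exp (-((ε / 4) ^ d / 2 * m)) / (β ^ d * μ.real S) := by
        gcongr
        exact measureReal_add_smul_le_four_pow_mul hKc hK hSK hKS hβ.le (by linarith)
    _ = (4 / β) ^ d * Real.exp (-((ε / 4) ^ d / 2 * m)) := by
        field_simp
        rw [← mul_pow, mul_div_cancel₀ _ hβ.ne']
    _ = (8 * d / ε) ^ d * Real.exp (-((ε / 4) ^ d / 2 * m)) := by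
        congr 2
        simp only [β]
        field_simp
        ring

end Symmetrized

end NormedSpace

theorem exists_finset_card_le_five_div_pow_subset_iUnion_vadd_smul {E : Type*}
    [NormedAddCommGroup E] [NormedSpace ℝ E] [FiniteDimensional ℝ E] {K : Set E}
    (hKc : Convex ℝ K) (hK : IsCompact K) (hKi : (interior K).Nonempty)
    (hd : 16 * (finrank ℝ E : ℝ) ^ 2 + 2 ≤ (5 / 4) ^ finrank ℝ E) {ε : ℝ} (hε0 : 0 < ε)
    (hε1 : ε ≤ 1) :
    ∃ N : Finset E, (N.card : ℝ) ≤ (5 / ε) ^ finrank ℝ E ∧ K ⊆ ⋃ y ∈ N, y +ᵥ ε • K := by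
  classical
  borelize E
  obtain ⟨μ, hμ⟩ : ∃ μ : Measure E, μ.IsAddHaarMeasure := ⟨Measure.addHaar, inferInstance⟩
  set d := finrank ℝ E
  have hd0 : 0 < d := Nat.pos_of_ne_zero fun h => by rw [h] at hd; norm_num at hd
  obtain ⟨c, hc⟩ := exists_measureReal_le_two_pow_mul_measureReal_inter_neg (μ := μ) hKc hK
  set S := (c +ᵥ K) ∩ -(c +ᵥ K)
  have hSc : Convex ℝ S := (hKc.vadd c).inter (hKc.vadd c).neg
  have hSb : Balanced ℝ S := (balanced_iff_neg_mem hSc).2 fun x hx =>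
    ⟨hx.2, neg_mem_neg.2 hx.1⟩
  have hS : IsCompact S := (hK.vadd c).inter_right (hK.vadd c).neg.isClosed
  have hS0 : μ S ≠ 0 := fun h => by
    have hKpos : 0 < μ.real K :=
      ENNReal.toReal_pos (Measure.measure_pos_of_nonempty_interior _ hKi).ne'
        hK.measure_lt_top.ne
    rw [show μ.real S = 0 by simp [Measure.real, h], mul_zero] at hc
    linarith
  obtain ⟨N, hcov, hcard⟩ := exists_finset_subset_iUnion_vadd_smul_card_le hKc hK
    inter_subset_left hc hSc hSb hS hS0 hd0 hε0 hε1 ⌈16 * d ^ 2 * (4 / ε) ^ d⌉₊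
  refine ⟨N.image (· + ε • c), ?_, fun x hx => ?_⟩
  · calc ((N.image (· + ε • c)).card : ℝ) ≤ N.card := by exact_mod_cast Finset.card_image_le
      _ ≤ (16 * d ^ 2 + 2) * (4 / ε) ^ d := hcard.trans (natCeil_add_pow_mul_exp_neg_le hd0 hε0 hε1)
      _ ≤ (5 / 4) ^ d * (4 / ε) ^ d := by gcongr
      _ = (5 / ε) ^ d := by rw [← mul_pow]; field_simp
  · have := hcov hx
    simp only [mem_iUnion, Finset.mem_image, exists_prop] at this ⊢
    obtain ⟨y, hy, hxy⟩ := this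
    refine ⟨y + ε • c, ⟨y, hy, rfl⟩, ?_⟩
    have := smul_set_mono (a := ε) inter_subset_left (mem_vadd_set_iff_sub_mem.1 hxy)
    rw [smul_vadd_set_distrib, mem_vadd_set_iff_sub_mem] at this
    rw [mem_vadd_set_iff_sub_mem, ← sub_sub]
    exact this

theorem eventually_sixteen_mul_sq_add_two_le_pow :
    ∀ᶠ n : ℕ in atTop, 16 * (n : ℝ) ^ 2 + 2 ≤ (5 / 4) ^ n := by
  have h := (tendsto_pow_const_div_const_pow_of_one_lt 2 (by norm_num : (1 : ℝ) < 5 / 4)).eventually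
    (gt_mem_nhds (by norm_num : (0 : ℝ) < 1 / 18))
  filter_upwards [h, eventually_ge_atTop 1] with n hn hn1
  have : (1 : ℝ) ≤ n := by exact_mod_cast hn1
  rw [div_lt_iff₀ (by positivity)] at hn
  nlinarith

theorem stmt8 :
    ∃ n₀ : ℕ, ∀ n : ℕ, n₀ ≤ n →
    ∀ K : Set (Fin n → ℝ), Convex ℝ K → IsCompact K → (0 : Fin n → ℝ) ∈ interior K →
    ∀ ε : ℝ, ε ∈ Set.Ioc (0:ℝ) 1 →
    ∃ N : Finset (Fin n → ℝ),
      (N.card : ℝ) ≤ (5 / ε) ^ n ∧ K ⊆ ⋃ y ∈ N, y +ᵥ ε • K := by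
  obtain ⟨n₀, hn₀⟩ := eventually_atTop.1 eventually_sixteen_mul_sq_add_two_le_pow
  refine ⟨n₀, fun n hn K hKc hK hK0 ε hε => ?_⟩
  simpa using exists_finset_card_le_five_div_pow_subset_iUnion_vadd_smul hKc hK
    ⟨0, hK0⟩ (by simpa using hn₀ n hn) hε.1 hε.2
end

section
/- Let K be a convex body in R^n with Vol_n(K) = 1, λ ∈ (0,1), ε ∈ (0, λ), and let X_1,...,X_m be independent, each uniform on K - λK. Then the probability that {X_i + λK}_{i=1}^m covers K is at least 1 - |N|·(1 - (λ-ε)^n/Vol_n(K-λK))^m, where N is any ε-net on K contained in K - εK. -/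
open MeasureTheory Set Pointwise ProbabilityTheory ENNReal

/-! For a net point `y`, convexity gives `y - (λ - ε) • K ⊆ K - λ • K`, a set of volume
`(λ - ε) ^ n`, and any `x` in it satisfies `y + ε • K ⊆ x + λ • K`. So the translates cover `K`
as soon as every net point `y` has some `X i` in `y - (λ - ε) • K`; by independence each `y`
misses all `m` samples with probability at most `(1 - (λ - ε) ^ n / Vol (K - λ • K)) ^ m`,
and a union bound over `N` finishes. -/

section Convex

variable {E : Type*} [AddCommGroup E] [Module ℝ E] {K : Set E} {ε δ : ℝ}

theorem Convex.vadd_neg_smul_subset_sub_smul (hK : Convex ℝ K) (hε : 0 ≤ ε) (hδ : 0 ≤ δ)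
    {y : E} (hy : y ∈ K - ε • K) : y +ᵥ (-δ) • K ⊆ K - (ε + δ) • K := by
  rintro _ ⟨_, ⟨z, hz, rfl⟩, rfl⟩
  obtain ⟨a, ha, _, ⟨c, hc, rfl⟩, rfl⟩ := hy
  rw [hK.add_smul hε hδ]
  refine ⟨a, ha, ε • c + δ • z, add_mem_add (smul_mem_smul_set hc) (smul_mem_smul_set hz), ?_⟩
  simp only [vadd_eq_add, neg_smul]
  abel

theorem Convex.subset_iUnion_vadd_smul_of_net (hK : Convex ℝ K) (hε : 0 ≤ ε) (hδ : 0 ≤ δ)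
    {N : Set E} (hnet : K ⊆ ⋃ y ∈ N, y +ᵥ ε • K) {ι : Type*} {x : ι → E}
    (hx : ∀ y ∈ N, ∃ i, x i ∈ y +ᵥ (-δ) • K) : K ⊆ ⋃ i, x i +ᵥ (δ + ε) • K := by
  intro p hp
  obtain ⟨y, hyN, _, ⟨w, hw, rfl⟩, rfl⟩ := mem_iUnion₂.mp (hnet hp)
  obtain ⟨i, _, ⟨z, hz, rfl⟩, hi⟩ := hx y hyN
  refine mem_iUnion.mpr ⟨i, δ • z + ε • w, ?_, ?_⟩
  · rw [hK.add_smul hδ hε]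
    exact add_mem_add (smul_mem_smul_set hz) (smul_mem_smul_set hw)
  · rw [← hi]
    simp only [vadd_eq_add, neg_smul]
    abel

end Convex

theorem measure_preimage_of_map_eq_uniform {Ω α : Type*} [MeasurableSpace Ω] [MeasurableSpace α]
    {P : Measure Ω} {μ : Measure α} {X : Ω → α} {T S : Set α} (hX : Measurable X)
    (hunif : P.map X = (μ T)⁻¹ • μ.restrict T) (hS : MeasurableSet S) (hST : S ⊆ T) :
    P (X ⁻¹' S) = μ S / μ T := by
  rw [← Measure.map_apply hX hS, hunif, Measure.smul_apply, Measure.restrict_apply hS,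
    inter_eq_self_of_subset_left hST, smul_eq_mul, ENNReal.div_eq_inv_mul]

namespace ProbabilityTheory.iIndepFun

variable {Ω α β ι : Type*} [MeasurableSpace Ω] [MeasurableSpace α] [Fintype ι]
  {P : Measure Ω} [IsProbabilityMeasure P] {X : ι → Ω → α} {S : Set α} {p : ℝ≥0∞}

theorem measure_iInter_preimage_compl_le (hXm : ∀ i, Measurable (X i))
    (hindep : iIndepFun X P) (hS : MeasurableSet S) (hp : ∀ i, p ≤ P (X i ⁻¹' S)) :
    P (⋂ i, X i ⁻¹' Sᶜ) ≤ (1 - p) ^ Fintype.card ι := by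
  rw [hindep.meas_iInter fun i => ⟨Sᶜ, hS.compl, rfl⟩, ← Finset.card_univ, ← Finset.prod_const]
  refine Finset.prod_le_prod' fun i _ => ?_
  rw [preimage_compl, prob_compl_eq_one_sub (hXm i hS)]
  exact tsub_le_tsub_left (hp i) 1

theorem one_sub_card_mul_le_measure_forall_exists_mem (hXm : ∀ i, Measurable (X i))
    (hindep : iIndepFun X P) (N : Finset β) {S : β → Set α} (hS : ∀ y, MeasurableSet (S y))
    (hp : ∀ y ∈ N, ∀ i, p ≤ P (X i ⁻¹' S y)) :
    1 - N.card * (1 - p) ^ Fintype.card ι ≤ P {ω | ∀ y ∈ N, ∃ i, X i ω ∈ S y} := by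
  have hmiss : {ω | ∀ y ∈ N, ∃ i, X i ω ∈ S y}ᶜ = ⋃ y ∈ N, ⋂ i, X i ⁻¹' (S y)ᶜ := by
    ext ω; simp
  have hmiss_le : P (⋃ y ∈ N, ⋂ i, X i ⁻¹' (S y)ᶜ) ≤ N.card * (1 - p) ^ Fintype.card ι := by
    calc P (⋃ y ∈ N, ⋂ i, X i ⁻¹' (S y)ᶜ) ≤ ∑ y ∈ N, P (⋂ i, X i ⁻¹' (S y)ᶜ) :=
          measure_biUnion_finset_le N _
      _ ≤ ∑ _y ∈ N, (1 - p) ^ Fintype.card ι := Finset.sum_le_sum fun y hy =>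
          hindep.measure_iInter_preimage_compl_le hXm (hS y) (hp y hy)
      _ = N.card * (1 - p) ^ Fintype.card ι := by rw [Finset.sum_const, nsmul_eq_mul]
  calc 1 - N.card * (1 - p) ^ Fintype.card ι
      ≤ 1 - P {ω | ∀ y ∈ N, ∃ i, X i ω ∈ S y}ᶜ := tsub_le_tsub_left (hmiss ▸ hmiss_le) 1
    _ ≤ P {ω | ∀ y ∈ N, ∃ i, X i ω ∈ S y} := by
      rw [tsub_le_iff_right, ← measure_univ (μ := P)]
      exact measure_univ_le_add_compl _

end ProbabilityTheory.iIndepFun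

theorem stmt17_general (n m : ℕ) (K : Set (Fin n → ℝ))
    (hKconv : Convex ℝ K) (hKcomp : IsCompact K)
    (hKvol : volume K = 1)
    (lam ε : ℝ) (hε : ε ∈ Set.Ioo (0:ℝ) lam)
    (N : Finset (Fin n → ℝ)) (hnet : K ⊆ ⋃ y ∈ N, y +ᵥ ε • K)
    (hNsub : (N : Set (Fin n → ℝ)) ⊆ K - ε • K)
    (Ω : Type*) [MeasurableSpace Ω] (P : Measure Ω) [IsProbabilityMeasure P]
    (X : Fin m → Ω → (Fin n → ℝ)) (hXm : ∀ i, Measurable (X i))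
    (hXunif : ∀ i, Measure.map (X i) P
      = (volume (K - lam • K))⁻¹ • volume.restrict (K - lam • K))
    (hindep : iIndepFun X P) :
    1 - (N.card : ℝ≥0∞) *
        (1 - ENNReal.ofReal ((lam - ε) ^ n) / volume (K - lam • K)) ^ m
      ≤ P {ω | K ⊆ ⋃ i, X i ω +ᵥ lam • K} := by
  obtain ⟨hε₀, hεlam⟩ := hε
  have hδ : 0 ≤ lam - ε := (sub_pos.mpr hεlam).le
  set S : (Fin n → ℝ) → Set (Fin n → ℝ) := fun y => y +ᵥ (-(lam - ε)) • K
  have hS : ∀ y, MeasurableSet (S y) := fun y =>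
    ((hKcomp.image (continuous_const_smul _)).vadd y).isClosed.measurableSet
  have hSsub : ∀ y ∈ N, S y ⊆ K - lam • K := fun y hy => by
    simpa only [add_sub_cancel] using hKconv.vadd_neg_smul_subset_sub_smul hε₀.le hδ (hNsub hy)
  have hhit : ∀ y ∈ N, ∀ i,
      ENNReal.ofReal ((lam - ε) ^ n) / volume (K - lam • K) ≤ P (X i ⁻¹' S y) := fun y hy i => by
    rw [measure_preimage_of_map_eq_uniform (hXm i) (hXunif i) (hS y) (hSsub y hy),
      measure_vadd, Measure.addHaar_smul, Module.finrank_fin_fun, hKvol, mul_one, abs_pow, abs_neg,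
      abs_of_nonneg hδ]
  have hcover : {ω | ∀ y ∈ N, ∃ i, X i ω ∈ S y} ⊆ {ω | K ⊆ ⋃ i, X i ω +ᵥ lam • K} :=
    fun ω hω => by
      simpa only [sub_add_cancel, mem_ofPred_eq] using
        hKconv.subset_iUnion_vadd_smul_of_net hε₀.le hδ hnet hω
  calc _ ≤ P {ω | ∀ y ∈ N, ∃ i, X i ω ∈ S y} := by
        simpa using hindep.one_sub_card_mul_le_measure_forall_exists_mem hXm N hS hhit
    _ ≤ _ := measure_mono hcover

theorem stmt17 (n m : ℕ) (K : Set (Fin n → ℝ))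
    (hKconv : Convex ℝ K) (hKcomp : IsCompact K) (hKint : (0 : Fin n → ℝ) ∈ interior K)
    (hKvol : volume K = 1)
    (lam ε : ℝ) (hlam : lam ∈ Set.Ioo (0:ℝ) 1) (hε : ε ∈ Set.Ioo (0:ℝ) lam)
    (N : Finset (Fin n → ℝ)) (hnet : K ⊆ ⋃ y ∈ N, y +ᵥ ε • K)
    (hNsub : (N : Set (Fin n → ℝ)) ⊆ K - ε • K)
    (Ω : Type*) [MeasurableSpace Ω] (P : Measure Ω) [IsProbabilityMeasure P]
    (X : Fin m → Ω → (Fin n → ℝ)) (hXm : ∀ i, Measurable (X i))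
    (hXunif : ∀ i, Measure.map (X i) P
      = (volume (K - lam • K))⁻¹ • volume.restrict (K - lam • K))
    (hindep : iIndepFun X P) :
    1 - (N.card : ℝ≥0∞) *
        (1 - ENNReal.ofReal ((lam - ε) ^ n) / volume (K - lam • K)) ^ m
      ≤ P {ω | K ⊆ ⋃ i, X i ω +ᵥ lam • K} :=
  stmt17_general n m K hKconv hKcomp hKvol lam ε hε N hnet hNsub Ω P X hXm hXunif hindep
end
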